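/- Let N ≥ 4 be an integer divisible by 4. Let D be the N/4 × N/4 real matrix with entries D_{pq} = cos(4π(p−1)q/N); let P_4 be the N/4 × N/4 matrix whose first row has all entries equal to 2 and whose p-th row, for p ≥ 2, has entry 1 in column 1, entry 3 in column p, and entry 2 in every other column; and let D̄ be the N/4 × N/4 matrix with entries D̄_{pq} = (8/N)·(1 − (1/2)[q=1])·(1 − (1/2)[p=N/4])·cos(4π(q−1)p/N), where [·] is the indicator. Then (P_4 D) D̄ = D̄ (P_4 D) = I; in particular P_4 D is invertible with inverse D̄. -/

import Mathlib

/-!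
Index rows and columns from `0`, and write `M = N/4` and `θₖ = π(k+1)/M`, so `D_{qk} = cos(qθₖ)`.
Entrywise `P₄ = 2 - [q = 0] + [q = p]`, and `∑_{q<M} cos(qθₖ) = (1 - cos(Mθₖ))/2`, so
`(P₄D)_{pk} = cos(pθₖ) - cos(Mθₖ)`.
By the product-to-sum formula, the entries of `(P₄D)D̄` become trapezoidal sums
`∑_{j=1}^{M} wⱼ cos(πmj/M)` (weight `1/2` at `j = M`), which equal `M·[2M ∣ m] - 1/2`:
folding the sum of the symmetric sequence `cos(πmb/M)` over the full period `0 ≤ b < 2M` gives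
a geometric sum of `2M`-th roots of unity. The other product is `1` because a one-sided inverse
of a square matrix is two-sided.
-/

open Real Finset

/-- The `N/4 × N/4` matrix `D` with 1-indexed entries
`D_{pq} = cos(4π(p−1)q/N)`; the `Fin` index `p` corresponds to row `p+1`. -/
noncomputable def Dmat (N : ℕ) : Matrix (Fin (N / 4)) (Fin (N / 4)) ℝ :=
  fun p q => Real.cos (4 * Real.pi * (p : ℕ) * ((q : ℕ) + 1) / N)

/-- The `N/4 × N/4` matrix `P₄`: the first row has all entries `2`; for `p ≥ 2`
the `p`-th row has entry `1` in column `1`, entry `3` in column `p`, and entry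
`2` in every other column. -/
def P4mat (N : ℕ) : Matrix (Fin (N / 4)) (Fin (N / 4)) ℝ := fun p q =>
  if (p : ℕ) = 0 then 2
  else if (q : ℕ) = 0 then 1
  else if q = p then 3
  else 2

/-- The `N/4 × N/4` matrix `D̄` with 1-indexed entries
`D̄_{pq} = (8/N)·(1 − (1/2)[q=1])·(1 − (1/2)[p=N/4])·cos(4π(q−1)p/N)`. -/
noncomputable def DbarMat (N : ℕ) : Matrix (Fin (N / 4)) (Fin (N / 4)) ℝ :=
  fun p q => (8 / (N : ℝ)) * (1 - (1 / 2) * (if (q : ℕ) = 0 then 1 else 0)) *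
    (1 - (1 / 2) * (if (p : ℕ) + 1 = N / 4 then 1 else 0)) *
    Real.cos (4 * Real.pi * (q : ℕ) * ((p : ℕ) + 1) / N)

theorem sum_range_two_mul_add_eq_of_reflect {β : Type*} [AddCommMonoid β] {M : ℕ} (f : ℕ → β)
    (hf : ∀ j ≤ 2 * M, f (2 * M - j) = f j) :
    ∑ b ∈ range (2 * M), f b + f 0 = 2 • ∑ b ∈ range M, f b + f M := by
  have hupper : ∑ b ∈ range M, f (M + b) = ∑ j ∈ range M, f (j + 1) := by
    rw [← sum_range_reflect]
    refine sum_congr rfl fun j hj => ?_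
    have hj : j < M := mem_range.mp hj
    rw [← hf (j + 1) (by omega)]
    congr 1
    omega
  rw [two_mul, sum_range_add, hupper, add_assoc, ← sum_range_succ', sum_range_succ, two_nsmul,
    add_assoc]

theorem sum_range_trapezoid_eq_of_reflect {M : ℕ} (hM : 0 < M) (f : ℕ → ℝ)
    (hf : ∀ j ≤ 2 * M, f (2 * M - j) = f j) :
    ∑ k ∈ range M, (1 - 1 / 2 * (if k + 1 = M then 1 else 0)) * f (k + 1) =
      (∑ b ∈ range (2 * M), f b - f 0) / 2 := by
  have hfold := sum_range_two_mul_add_eq_of_reflect f hf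
  have hshift := sum_range_succ' f M
  rw [sum_range_succ] at hshift
  obtain ⟨M, rfl⟩ := Nat.exists_eq_add_one_of_ne_zero hM.ne'
  have hweight : ∑ k ∈ range (M + 1), (1 - 1 / 2 * (if k + 1 = M + 1 then 1 else 0)) * f (k + 1) =
      ∑ k ∈ range (M + 1), f (k + 1) - f (M + 1) / 2 := by
    rw [sum_range_succ, sum_range_succ, if_pos rfl,
      sum_congr rfl fun k hk => by rw [if_neg (by simp at hk; omega), mul_zero, sub_zero, one_mul]]
    ring
  rw [hweight]
  rw [two_nsmul] at hfold
  linarith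

theorem cos_pi_mul_div_reflect {M : ℕ} (hM : 0 < M) (m : ℤ) {j : ℕ} (hj : j ≤ 2 * M) :
    cos (π * m * ((2 * M - j : ℕ) : ℝ) / M) = cos (π * m * j / M) := by
  rw [← cos_int_mul_two_pi_sub _ m]
  congr 1
  push_cast [hj]
  field_simp
  ring

theorem sum_range_two_mul_cos_pi_mul_div {M : ℕ} (hM : 0 < M) (m : ℤ) :
    ∑ b ∈ range (2 * M), cos (π * m * b / M) = if (2 * M : ℤ) ∣ m then 2 * M else 0 := by
  have hM' : (M : ℂ) ≠ 0 := by exact_mod_cast hM.ne'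
  split_ifs with h
  · obtain ⟨t, rfl⟩ := h
    have hterm : ∀ b : ℕ, cos (π * ((2 * M * t : ℤ) : ℝ) * b / M) = 1 := fun b => by
      rw [← cos_int_mul_two_pi (t * b)]
      congr 1
      push_cast
      field_simp
    simp only [hterm, sum_const, card_range, nsmul_eq_mul, mul_one, Nat.cast_mul, Nat.cast_ofNat]
  · set ζ := Complex.exp (π * m / M * Complex.I)
    have hterm : ∀ b : ℕ, cos (π * m * b / M) = (ζ ^ b).re := fun b => by
      rw [← Complex.exp_nat_mul, ← Complex.exp_ofReal_mul_I_re]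
      push_cast
      ring_nf
    have hζ : ζ ≠ 1 := by
      intro h1
      obtain ⟨n, hn⟩ := Complex.exp_eq_one_iff.mp h1
      apply h
      refine ⟨n, ?_⟩
      have : (m : ℂ) = 2 * M * n := by
        field_simp at hn
        linear_combination hn
      exact_mod_cast this
    have hζM : ζ ^ (2 * M) = 1 := by
      rw [← Complex.exp_nat_mul, ← Complex.exp_int_mul_two_pi_mul_I m]
      congr 1
      push_cast
      field_simp
    simp_rw [hterm, ← Complex.re_sum, geom_sum_eq hζ, hζM, sub_self, zero_div, Complex.zero_re,
      Nat.cast_zero]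

theorem sum_range_cos_pi_mul_div {M : ℕ} (hM : 0 < M) {m : ℤ} (hm : ¬ (2 * M : ℤ) ∣ m) :
    ∑ b ∈ range M, cos (π * m * b / M) = (1 - cos (π * m)) / 2 := by
  have hfold := sum_range_two_mul_add_eq_of_reflect (fun b : ℕ => cos (π * m * b / M))
    fun j hj => cos_pi_mul_div_reflect hM m hj
  have hM' : (M : ℝ) ≠ 0 := by positivity
  simp only [sum_range_two_mul_cos_pi_mul_div hM, if_neg hm, nsmul_eq_mul, Nat.cast_zero,
    mul_zero, zero_div, cos_zero, mul_div_cancel_right₀ _ hM'] at hfold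
  push_cast at hfold
  linarith

theorem sum_range_trapezoid_cos_pi_mul_div {M : ℕ} (hM : 0 < M) (m : ℤ) :
    ∑ k ∈ range M, (1 - 1 / 2 * (if k + 1 = M then 1 else 0)) * cos (π * m * (k + 1) / M) =
      (if (2 * M : ℤ) ∣ m then (M : ℝ) else 0) - 1 / 2 := by
  have h := sum_range_trapezoid_eq_of_reflect hM (fun b : ℕ => cos (π * m * b / M))
    fun j hj => cos_pi_mul_div_reflect hM m hj
  push_cast at h
  rw [h, sum_range_two_mul_cos_pi_mul_div hM]
  simp only [mul_zero, zero_div, cos_zero]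
  split_ifs <;> push_cast <;> ring

theorem cos_sub_cos_mul_cos (a b c : ℝ) :
    (cos a - cos c) * cos b = (cos (a - b) + cos (a + b) - cos (c - b) - cos (c + b)) / 2 := by
  rw [cos_sub, cos_add, cos_sub, cos_add]
  ring

theorem cos_sub_cos_pi_mul_cos {M : ℕ} (hM : (M : ℝ) ≠ 0) (p r : ℕ) (x : ℝ) :
    (cos (π * p * x / M) - cos (π * x)) * cos (π * r * x / M) =
      (cos (π * (p - r : ℤ) * x / M) + cos (π * (p + r : ℤ) * x / M) -
        cos (π * (M - r : ℤ) * x / M) - cos (π * (M + r : ℤ) * x / M)) / 2 := by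
  have hx : π * x = π * M * x / M := by field_simp
  rw [hx, cos_sub_cos_mul_cos]
  push_cast
  ring_nf

theorem Int.dvd_iff_eq_zero_of_lt {n x : ℤ} (h₁ : -n < x) (h₂ : x < n) : n ∣ x ↔ x = 0 :=
  ⟨fun h => Int.eq_zero_of_abs_lt_dvd h (abs_lt.mpr ⟨h₁, h₂⟩), fun h => h ▸ dvd_zero n⟩

theorem sum_cos_sub_mul_trapezoid_cos {M : ℕ} (p r : Fin M) :
    ∑ k : Fin M, (cos (π * p * (k + 1) / M) - cos (π * (k + 1))) *
      (2 / M * (1 - 1 / 2 * (if (r : ℕ) = 0 then 1 else 0)) *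
        (1 - 1 / 2 * (if (k : ℕ) + 1 = M then 1 else 0)) * cos (π * r * (k + 1) / M)) =
      if p = r then 1 else 0 := by
  have hM : 0 < M := p.pos
  have hM' : (M : ℝ) ≠ 0 := by positivity
  set d : ℝ := 1 - 1 / 2 * (if (r : ℕ) = 0 then 1 else 0)
  set w : ℕ → ℝ := fun k => 1 - 1 / 2 * (if k + 1 = M then 1 else 0)
  have hterm : ∀ k : ℕ, (cos (π * p * (k + 1) / M) - cos (π * (k + 1))) *
      (2 / M * d * w k * cos (π * r * (k + 1) / M)) =
      1 / M * d * (w k * cos (π * (p - r : ℤ) * (k + 1) / M) +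
        w k * cos (π * (p + r : ℤ) * (k + 1) / M) - w k * cos (π * (M - r : ℤ) * (k + 1) / M) -
        w k * cos (π * (M + r : ℤ) * (k + 1) / M)) := fun k => by
    linear_combination 2 / M * d * w k * cos_sub_cos_pi_mul_cos hM' p r (k + 1)
  rw [Fin.sum_univ_eq_sum_range (fun k : ℕ => (cos (π * p * (k + 1) / M) - cos (π * (k + 1))) *
      (2 / M * d * w k * cos (π * r * (k + 1) / M))) M, sum_congr rfl fun k _ => hterm k,
    ← mul_sum]
  simp only [w, sum_add_distrib, sum_sub_distrib, sum_range_trapezoid_cos_pi_mul_div hM]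
  have hp := p.isLt
  have hr := r.isLt
  have h₁ : (2 * M : ℤ) ∣ p - r ↔ p = r := by
    rw [Int.dvd_iff_eq_zero_of_lt (by omega) (by omega), Fin.ext_iff]
    omega
  have h₂ : (2 * M : ℤ) ∣ p + r ↔ p = r ∧ (r : ℕ) = 0 := by
    rw [Int.dvd_iff_eq_zero_of_lt (by omega) (by omega), Fin.ext_iff]
    omega
  have h₃ : ¬ (2 * M : ℤ) ∣ M - r := by
    rw [Int.dvd_iff_eq_zero_of_lt (by omega) (by omega)]
    omega
  have h₄ : ¬ (2 * M : ℤ) ∣ M + r := by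
    rw [Int.dvd_iff_eq_zero_of_lt (by omega) (by omega)]
    omega
  simp only [d, h₁, h₂, h₃, h₄, if_false]
  split_ifs <;> first | tauto | (field_simp; ring)

theorem cast_eq_four_mul_div_four {N : ℕ} (hN4 : 4 ∣ N) : (N : ℝ) = 4 * (N / 4 : ℕ) := by
  exact_mod_cast (Nat.mul_div_cancel' hN4).symm

theorem P4mat_apply (N : ℕ) (p q : Fin (N / 4)) :
    P4mat N p q = 2 - (if (q : ℕ) = 0 then 1 else 0) + (if (q : ℕ) = p then 1 else 0) := by
  simp only [P4mat, Fin.ext_iff]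
  split_ifs <;> first | omega | norm_num

theorem P4mat_mul_Dmat_apply {N : ℕ} (hN4 : 4 ∣ N) (p k : Fin (N / 4)) :
    (P4mat N * Dmat N) p k = cos (π * p * (k + 1) / (N / 4 : ℕ)) - cos (π * (k + 1)) := by
  have hM : 0 < N / 4 := p.pos
  have hM' : ((N / 4 : ℕ) : ℝ) ≠ 0 := by positivity
  have hk : ¬ (2 * (N / 4 : ℕ) : ℤ) ∣ ((k : ℕ) + 1 : ℕ) := fun h => by
    have := Int.le_of_dvd (by omega) h
    omega
  have hD : ∀ q : Fin (N / 4),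
      Dmat N q k = cos (π * (((k : ℕ) + 1 : ℕ) : ℤ) * (q : ℕ) / (N / 4 : ℕ)) := by
    intro q
    rw [Dmat, cast_eq_four_mul_div_four hN4]
    congr 1
    push_cast
    field_simp
  calc (P4mat N * Dmat N) p k
      = ∑ q : Fin (N / 4), (2 - (if (q : ℕ) = 0 then 1 else 0) + (if (q : ℕ) = p then 1 else 0)) *
          cos (π * (((k : ℕ) + 1 : ℕ) : ℤ) * (q : ℕ) / (N / 4 : ℕ)) := by
        simp only [Matrix.mul_apply, P4mat_apply, hD]
    _ = ∑ q ∈ range (N / 4), (2 - (if q = 0 then 1 else 0) + (if q = p then 1 else 0)) *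
          cos (π * (((k : ℕ) + 1 : ℕ) : ℤ) * q / (N / 4 : ℕ)) :=
        Fin.sum_univ_eq_sum_range (fun q => (2 - (if q = 0 then 1 else 0) +
          (if q = p then 1 else 0)) * cos (π * (((k : ℕ) + 1 : ℕ) : ℤ) * q / (N / 4 : ℕ))) _
    _ = cos (π * p * (k + 1) / (N / 4 : ℕ)) - cos (π * (k + 1)) := by
        simp only [add_mul, sub_mul, sum_add_distrib, sum_sub_distrib, ite_mul, one_mul, zero_mul,
          sum_ite_eq', mem_range, hM, p.isLt, if_true, ← mul_sum,
          sum_range_cos_pi_mul_div hM hk, CharP.cast_eq_zero, mul_zero, zero_div, cos_zero]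
        push_cast
        ring_nf

theorem DbarMat_apply {N : ℕ} (hN4 : 4 ∣ N) (k r : Fin (N / 4)) :
    DbarMat N k r = 2 / (N / 4 : ℕ) * (1 - 1 / 2 * (if (r : ℕ) = 0 then 1 else 0)) *
      (1 - 1 / 2 * (if (k : ℕ) + 1 = N / 4 then 1 else 0)) *
        cos (π * r * (k + 1) / (N / 4 : ℕ)) := by
  have hM' : ((N / 4 : ℕ) : ℝ) ≠ 0 := by
    have := k.pos
    positivity
  rw [DbarMat, cast_eq_four_mul_div_four hN4]
  congr 2
  · field_simp
    norm_num
  · field_simp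

theorem P4D_mul_DbarMat_general (N : ℕ) (hN4 : 4 ∣ N) :
    (P4mat N * Dmat N) * DbarMat N = 1 ∧ DbarMat N * (P4mat N * Dmat N) = 1 ∧
    IsUnit (P4mat N * Dmat N) ∧ (P4mat N * Dmat N)⁻¹ = DbarMat N := by
  have h : (P4mat N * Dmat N) * DbarMat N = 1 := by
    ext p r
    simp only [Matrix.mul_apply, Matrix.one_apply, P4mat_mul_Dmat_apply hN4, DbarMat_apply hN4]
    exact sum_cos_sub_mul_trapezoid_cos p r
  have h' : DbarMat N * (P4mat N * Dmat N) = 1 := mul_eq_one_comm.mp h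
  exact ⟨h, h', ⟨⟨_, _, h, h'⟩, rfl⟩, Matrix.inv_eq_right_inv h⟩

theorem P4D_mul_DbarMat (N : ℕ) (hN4 : 4 ∣ N) (hN : 4 ≤ N) :
    (P4mat N * Dmat N) * DbarMat N = 1 ∧ DbarMat N * (P4mat N * Dmat N) = 1 ∧
    IsUnit (P4mat N * Dmat N) ∧ (P4mat N * Dmat N)⁻¹ = DbarMat N :=
  P4D_mul_DbarMat_general N hN4
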